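/- Let Z_• be a green nonlinear stability function and M a module. Among submodules M' ⊆ M with t₀(M') = t₁(M) there is a unique maximal one M₁, and M₁ contains every submodule M' ⊆ M with t₀(M') = t₁(M). -/

import Mathlib

/-!
Write `t₁ = t₁(M)` and `φ(N) = a_{t₁}·d(N) - t₁ · b_{t₁}·d(N)`, an additive function of the
dimension vector. As `t ↦ μ_t(N)` is continuous and bounded, `μ_t(N) ≥ t` for all `t ≤ t₀(N)`;
since `t₁ ≤ t₀(N)` this gives `φ(N) ≥ 0` for every submodule `N`, with equality for `N ≠ ⊥`
exactly when `t₀(N) = t₁`. The dimension vector is modular on the lattice of submodules, so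
`φ(p ⊔ q) + φ(p ⊓ q) = φ(p) + φ(q)` and the zero set of `φ` is closed under `⊔`. In a Noetherian
module such a set contains its supremum, which is the required `M₁`.
-/

open scoped BigOperators

noncomputable section

/-- Dot product of a real vector with a dimension vector. -/
def dprod {n : ℕ} (x : Fin n → ℝ) (v : Fin n → ℕ) : ℝ := ∑ i, x i * (v i : ℝ)

/-- Slope of a dimension vector with respect to a linear stability function
`Z(x) = a·x + i b·x`. -/
def zslope {n : ℕ} (a b : Fin n → ℝ) (v : Fin n → ℕ) : ℝ := dprod a v / dprod b v

/-- The semistability set `D(M)` of a module `M`, with respect to a dimension-vector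
assignment `d`. -/
def DSet {Λ : Type} [Ring Λ] {n : ℕ}
    (d : (N : Type) → [AddCommGroup N] → [Module Λ N] → Fin n → ℕ)
    (M : Type) [AddCommGroup M] [Module Λ M] : Set (Fin n → ℝ) :=
  {x | dprod x (d M) = 0 ∧ ∀ M' : Submodule Λ M, dprod x (d ↥M') ≤ 0}

/-- A module is Schurian if it is nonzero and every nonzero endomorphism is invertible,
i.e. its endomorphism ring is a division algebra. -/
def Schurian (Λ : Type) [Ring Λ] (M : Type) [AddCommGroup M] [Module Λ M] : Prop :=
  (∃ y : M, y ≠ 0) ∧ ∀ f : M →ₗ[Λ] M, f ≠ 0 → Function.Bijective f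

/-- `X` belongs to `E(M)`: `X` admits a finite filtration with all subquotients
isomorphic to `M`. -/
def IsFiltered (Λ : Type) [Ring Λ] (M : Type) [AddCommGroup M] [Module Λ M]
    (X : Type) [AddCommGroup X] [Module Λ X] : Prop :=
  ∃ (k : ℕ) (F : Fin (k + 1) → Submodule Λ X), Monotone F ∧ F 0 = ⊥ ∧ F (Fin.last k) = ⊤ ∧
    ∀ i : Fin k, Nonempty
      ((↥(F i.succ) ⧸ Submodule.comap (F i.succ).subtype (F i.castSucc)) ≃ₗ[Λ] M)

/-- Slope at time `t` of a dimension vector, for a nonlinear stability function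
`Z_t(x) = a_t·x + i b_t·x`. -/
def muZ {n : ℕ} (a b : ℝ → Fin n → ℝ) (t : ℝ) (v : Fin n → ℕ) : ℝ :=
  dprod (a t) v / dprod (b t) v

/-- `M` is `Z_t`-semistable: every nonzero submodule has zslope at least that of `M`. -/
def Semistable {Λ : Type} [Ring Λ] {n : ℕ}
    (d : (N : Type) → [AddCommGroup N] → [Module Λ N] → Fin n → ℕ)
    (a b : ℝ → Fin n → ℝ) (t : ℝ)
    (M : Type) [AddCommGroup M] [Module Λ M] : Prop :=
  ∀ M' : Submodule Λ M, M' ≠ ⊥ → muZ a b t (d M) ≤ muZ a b t (d ↥M')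

/-- The nonlinear stability function given by `(a, b)` is green (for `Λ`): at every
semistable pair `(N, t₀)` (with `N` a nonzero finite-length `Λ`-module, `N`
`Z_{t₀}`-semistable and `μ_{t₀}(N) = t₀`), the derivative of `t ↦ μ_t(N)` at `t₀`
is `< 1`. -/
def ZGreen {Λ : Type} [Ring Λ] {n : ℕ}
    (d : (N : Type) → [AddCommGroup N] → [Module Λ N] → Fin n → ℕ)
    (a b : ℝ → Fin n → ℝ) : Prop :=
  ∀ (N : Type) [AddCommGroup N] [Module Λ N] [IsNoetherian Λ N] [IsArtinian Λ N] (t₀ : ℝ),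
    (∃ y : N, y ≠ 0) → Semistable d a b t₀ N → muZ a b t₀ (d N) = t₀ →
      deriv (fun t => muZ a b t (d N)) t₀ < 1

/-- `t₀(M)`: the smallest `t` with `μ_t(M) = t` (as an infimum). -/
def tzero {n : ℕ} (a b : ℝ → Fin n → ℝ) (v : Fin n → ℕ) : ℝ := sInf {t | muZ a b t v = t}

/-- `t₁(M)`: the smallest value of `t₀(M')` over nonzero submodules `M' ⊆ M`. -/
def tone {Λ : Type} [Ring Λ] {n : ℕ}
    (d : (N : Type) → [AddCommGroup N] → [Module Λ N] → Fin n → ℕ)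
    (a b : ℝ → Fin n → ℝ)
    (M : Type) [AddCommGroup M] [Module Λ M] : ℝ :=
  sInf {s : ℝ | ∃ M' : Submodule Λ M, M' ≠ ⊥ ∧ s = tzero a b (d ↥M')}

open Function Set

section Dprod

variable {n : ℕ}

lemma dprod_add_right (x : Fin n → ℝ) (v w : Fin n → ℕ) :
    dprod x (v + w) = dprod x v + dprod x w := by
  simp only [dprod, Pi.add_apply, Nat.cast_add, mul_add, Finset.sum_add_distrib]

lemma dprod_zero_right (x : Fin n → ℝ) : dprod x 0 = 0 := by
  simp [dprod]

lemma dprod_sub_smul_left (x y : Fin n → ℝ) (c : ℝ) (v : Fin n → ℕ) :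
    dprod (x - c • y) v = dprod x v - c * dprod y v := by
  simp only [dprod, Pi.sub_apply, Pi.smul_apply, smul_eq_mul, sub_mul, Finset.sum_sub_distrib,
    Finset.mul_sum, mul_assoc]

lemma dprod_pos {x : Fin n → ℝ} (hx : ∀ i, 0 < x i) {v : Fin n → ℕ} (hv : v ≠ 0) :
    0 < dprod x v := by
  obtain ⟨i, hi⟩ := Function.ne_iff.mp hv
  refine Finset.sum_pos' (fun j _ => mul_nonneg (hx j).le (Nat.cast_nonneg _))
    ⟨i, Finset.mem_univ i, mul_pos (hx i) (Nat.cast_pos.mpr (Nat.pos_of_ne_zero hi))⟩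

variable {a b : ℝ → Fin n → ℝ} {t : ℝ} {v : Fin n → ℕ}

lemma le_muZ_iff (hb : 0 < dprod (b t) v) :
    t ≤ muZ a b t v ↔ 0 ≤ dprod (a t - t • b t) v := by
  rw [muZ, le_div_iff₀ hb, dprod_sub_smul_left, sub_nonneg]

lemma muZ_eq_self_iff (hb : 0 < dprod (b t) v) :
    muZ a b t v = t ↔ dprod (a t - t • b t) v = 0 := by
  rw [muZ, div_eq_iff hb.ne', dprod_sub_smul_left, sub_eq_zero]

end Dprod

section FixedPoints

variable {f : ℝ → ℝ}

lemma bddBelow_fixedPoints (hlo : BddBelow (range f)) : BddBelow (fixedPoints f) := by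
  obtain ⟨m, hm⟩ := hlo
  exact ⟨m, fun t (ht : f t = t) => ht ▸ hm (mem_range_self t)⟩

/-- Far to the left the graph of `f` lies above the diagonal; apply the intermediate value
theorem to `f - id` between there and `t`. -/
lemma exists_isFixedPt_le (hf : Continuous f) (hlo : BddBelow (range f)) {t : ℝ}
    (ht : f t ≤ t) : ∃ s ≤ t, IsFixedPt f s := by
  obtain ⟨m, hm⟩ := hlo
  set s₀ := min t (m - 1)
  have hs₀ : s₀ ≤ f s₀ := (min_le_right _ _).trans ((sub_one_lt m).le.trans (hm (mem_range_self _)))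
  obtain ⟨s, hs, hfs⟩ := intermediate_value_Icc' (min_le_left t (m - 1))
    ((hf.sub continuous_id).continuousOn) ⟨sub_nonpos.mpr ht, sub_nonneg.mpr hs₀⟩
  exact ⟨s, hs.2, sub_eq_zero.mp hfs⟩

lemma le_apply_of_le_sInf_fixedPoints (hf : Continuous f) (hlo : BddBelow (range f)) {t : ℝ}
    (ht : t ≤ sInf (fixedPoints f)) : t ≤ f t := by
  by_contra! hlt
  obtain ⟨s, hst, hs⟩ := exists_isFixedPt_le hf hlo hlt.le
  have hts : t = s := le_antisymm (ht.trans (csInf_le (bddBelow_fixedPoints hlo) hs)) hst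
  exact hlt.ne (hts ▸ hs)

lemma sInf_fixedPoints_mem (hf : Continuous f) (hlo : BddBelow (range f))
    (hhi : BddAbove (range f)) : sInf (fixedPoints f) ∈ fixedPoints f := by
  obtain ⟨M, hM⟩ := hhi
  obtain ⟨s, -, hs⟩ := exists_isFixedPt_le hf hlo (hM (mem_range_self M))
  exact (isClosed_fixedPoints hf).csInf_mem ⟨s, hs⟩ (bddBelow_fixedPoints hlo)

end FixedPoints

section Tzero

variable {n : ℕ} {a b : ℝ → Fin n → ℝ} {v : Fin n → ℕ}

lemma continuous_muZ (hbpos : ∀ t i, 0 < b t i) (hCa : ∀ i, Continuous fun t => a t i)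
    (hCb : ∀ i, Continuous fun t => b t i) (hv : v ≠ 0) : Continuous fun t => muZ a b t v :=
  (continuous_finsetSum _ fun i _ => (hCa i).mul continuous_const).div
    (continuous_finsetSum _ fun i _ => (hCb i).mul continuous_const)
    fun t => (dprod_pos (hbpos t) hv).ne'

lemma range_subset_image_Icc {α : Type*} {f : ℝ → α} {T : ℝ} (hT : 0 ≤ T)
    (hlo : ∀ t ≤ -T, f t = f (-T)) (hhi : ∀ t, T ≤ t → f t = f T) :
    range f ⊆ f '' Icc (-T) T := by
  rintro _ ⟨t, rfl⟩
  rcases le_total t (-T) with h | h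
  · exact ⟨-T, ⟨le_rfl, by linarith⟩, (hlo t h).symm⟩
  rcases le_total T t with h' | h'
  · exact ⟨T, ⟨by linarith, le_rfl⟩, (hhi t h').symm⟩
  · exact ⟨t, ⟨h, h'⟩, rfl⟩

lemma isCompact_range_muZ (hbpos : ∀ t i, 0 < b t i) (hCa : ∀ i, Continuous fun t => a t i)
    (hCb : ∀ i, Continuous fun t => b t i)
    (hconst : ∃ T : ℝ, 0 < T ∧ (∀ t, T ≤ t → a t = a T ∧ b t = b T) ∧
      (∀ t, t ≤ -T → a t = a (-T) ∧ b t = b (-T)))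
    (hv : v ≠ 0) : IsCompact (range fun t => muZ a b t v) := by
  obtain ⟨T, hT, hhi, hlo⟩ := hconst
  have hsub := range_subset_image_Icc (f := fun t => muZ a b t v) hT.le
    (fun t ht => by simp only [muZ, (hlo t ht).1, (hlo t ht).2])
    (fun t ht => by simp only [muZ, (hhi t ht).1, (hhi t ht).2])
  rw [hsub.antisymm (image_subset_range _ _)]
  exact isCompact_Icc.image (continuous_muZ hbpos hCa hCb hv)

variable {t : ℝ}

lemma dprod_sub_smul_nonneg_of_le_tzero (hb : 0 < dprod (b t) v)
    (hf : Continuous fun t => muZ a b t v) (hlo : BddBelow (range fun t => muZ a b t v))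
    (ht : t ≤ tzero a b v) : 0 ≤ dprod (a t - t • b t) v :=
  (le_muZ_iff hb).mp (le_apply_of_le_sInf_fixedPoints hf hlo ht)

lemma dprod_sub_smul_eq_zero_iff (hb : 0 < dprod (b t) v)
    (hf : Continuous fun t => muZ a b t v) (hlo : BddBelow (range fun t => muZ a b t v))
    (hhi : BddAbove (range fun t => muZ a b t v)) (ht : t ≤ tzero a b v) :
    dprod (a t - t • b t) v = 0 ↔ tzero a b v = t := by
  rw [← muZ_eq_self_iff hb]
  refine ⟨fun h => le_antisymm (csInf_le (bddBelow_fixedPoints hlo) h) ht, fun h => ?_⟩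
  exact h ▸ sInf_fixedPoints_mem hf hlo hhi

end Tzero

lemma supClosed_setOf_eq_zero {α : Type*} [Lattice α] {f : α → ℝ}
    (hmod : ∀ p q, f (p ⊔ q) + f (p ⊓ q) = f p + f q) (hnn : ∀ p, 0 ≤ f p) :
    SupClosed {p | f p = 0} := by
  intro p (hp : f p = 0) q (hq : f q = 0)
  show f (p ⊔ q) = 0
  linarith [hmod p q, hnn (p ⊔ q), hnn (p ⊓ q)]

section Submodules

variable {Λ : Type} [Ring Λ] {n : ℕ} {d : (N : Type) → [AddCommGroup N] → [Module Λ N] → Fin n → ℕ}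
  {M : Type} [AddCommGroup M] [Module Λ M] [IsNoetherian Λ M] [IsArtinian Λ M]

lemma dim_eq_zero_iff
    (hzero : ∀ (N : Type) [AddCommGroup N] [Module Λ N] [IsNoetherian Λ N] [IsArtinian Λ N],
      (d N = 0 ↔ ∀ y : N, y = 0))
    (N : Submodule Λ M) : d ↥N = 0 ↔ N = ⊥ := by
  rw [hzero, Submodule.eq_bot_iff]
  exact ⟨fun h x hx => congrArg Subtype.val (h ⟨x, hx⟩), fun h y => Subtype.ext (h y y.2)⟩

lemma dim_submodule_le
    (hadd : ∀ (N : Type) [AddCommGroup N] [Module Λ N] [IsNoetherian Λ N] [IsArtinian Λ N]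
      (A : Submodule Λ N), d ↥A + d (N ⧸ A) = d N)
    (N : Submodule Λ M) : d ↥N ≤ d M :=
  hadd M N ▸ le_self_add

/-- Second isomorphism theorem: `p / (p ⊓ q) ≃ (p ⊔ q) / q`. -/
lemma dim_sup_add_dim_inf
    (hiso : ∀ (N N' : Type) [AddCommGroup N] [Module Λ N] [AddCommGroup N'] [Module Λ N']
      [IsNoetherian Λ N] [IsArtinian Λ N], (N ≃ₗ[Λ] N') → d N = d N')
    (hadd : ∀ (N : Type) [AddCommGroup N] [Module Λ N] [IsNoetherian Λ N] [IsArtinian Λ N]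
      (A : Submodule Λ N), d ↥A + d (N ⧸ A) = d N)
    (p q : Submodule Λ M) : d ↥(p ⊔ q) + d ↥(p ⊓ q) = d ↥p + d ↥q := by
  have hsup := hadd ↥(p ⊔ q) (Submodule.comap (p ⊔ q).subtype q)
  have hp := hadd ↥p (Submodule.comap p.subtype (p ⊓ q))
  rw [hiso _ _ (Submodule.comapSubtypeEquivOfLe le_sup_right)] at hsup
  rw [hiso _ _ (Submodule.comapSubtypeEquivOfLe inf_le_left)] at hp
  have hquot := hiso _ _ (LinearMap.quotientInfEquivSupQuotient p q)
  rw [← Submodule.comap_inf] at hquot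
  rw [← hsup, ← hp, hquot]
  abel

variable {a b : ℝ → Fin n → ℝ}

lemma finite_setOf_tzero
    (hadd : ∀ (N : Type) [AddCommGroup N] [Module Λ N] [IsNoetherian Λ N] [IsArtinian Λ N]
      (A : Submodule Λ N), d ↥A + d (N ⧸ A) = d N) :
    {s : ℝ | ∃ M' : Submodule Λ M, M' ≠ ⊥ ∧ s = tzero a b (d ↥M')}.Finite :=
  ((finite_Iic (d M)).image (tzero a b)).subset
    (by rintro _ ⟨N, -, rfl⟩; exact ⟨_, dim_submodule_le hadd N, rfl⟩)

lemma tone_le_tzero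
    (hadd : ∀ (N : Type) [AddCommGroup N] [Module Λ N] [IsNoetherian Λ N] [IsArtinian Λ N]
      (A : Submodule Λ N), d ↥A + d (N ⧸ A) = d N)
    {N : Submodule Λ M} (hN : N ≠ ⊥) : tone d a b M ≤ tzero a b (d ↥N) :=
  csInf_le (finite_setOf_tzero hadd).bddBelow ⟨N, hN, rfl⟩

lemma exists_tzero_eq_tone [Nontrivial M]
    (hadd : ∀ (N : Type) [AddCommGroup N] [Module Λ N] [IsNoetherian Λ N] [IsArtinian Λ N]
      (A : Submodule Λ N), d ↥A + d (N ⧸ A) = d N) :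
    ∃ N : Submodule Λ M, N ≠ ⊥ ∧ tzero a b (d ↥N) = tone d a b M := by
  have hfin := finite_setOf_tzero (M := M) (a := a) (b := b) hadd
  obtain ⟨N, hN, h⟩ := Nonempty.csInf_mem (by exact ⟨_, ⊤, top_ne_bot, rfl⟩) hfin
  exact ⟨N, hN, h.symm⟩

end Submodules

theorem stmt13_general (Λ : Type) [Ring Λ] {n : ℕ}
    (d : (N : Type) → [AddCommGroup N] → [Module Λ N] → Fin n → ℕ)
    (hiso : ∀ (N N' : Type) [AddCommGroup N] [Module Λ N] [AddCommGroup N'] [Module Λ N']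
      [IsNoetherian Λ N] [IsArtinian Λ N], (N ≃ₗ[Λ] N') → d N = d N')
    (hadd : ∀ (N : Type) [AddCommGroup N] [Module Λ N] [IsNoetherian Λ N] [IsArtinian Λ N]
      (A : Submodule Λ N), d ↥A + d (N ⧸ A) = d N)
    (hzero : ∀ (N : Type) [AddCommGroup N] [Module Λ N] [IsNoetherian Λ N] [IsArtinian Λ N],
      (d N = 0 ↔ ∀ y : N, y = 0))
    (a b : ℝ → Fin n → ℝ)
    (hbpos : ∀ t i, 0 < b t i)
    (hC1a : ∀ i, ContDiff ℝ 1 (fun t => a t i))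
    (hC1b : ∀ i, ContDiff ℝ 1 (fun t => b t i))
    (hconst : ∃ T : ℝ, 0 < T ∧ (∀ t, T ≤ t → a t = a T ∧ b t = b T) ∧
      (∀ t, t ≤ -T → a t = a (-T) ∧ b t = b (-T)))
    (M : Type) [AddCommGroup M] [Module Λ M] [IsNoetherian Λ M] [IsArtinian Λ M]
    (hM0 : ∃ y : M, y ≠ 0) :
    ∃ M₁ : Submodule Λ M, M₁ ≠ ⊥ ∧ tzero a b (d ↥M₁) = tone d a b M ∧
      ∀ N : Submodule Λ M, N ≠ ⊥ → tzero a b (d ↥N) = tone d a b M → N ≤ M₁ := by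
  have hCa := fun i => (hC1a i).continuous
  have hCb := fun i => (hC1b i).continuous
  set t₁ := tone d a b M
  set φ : Submodule Λ M → ℝ := fun N => dprod (a t₁ - t₁ • b t₁) (d ↥N)
  have hφ : ∀ N : Submodule Λ M, N ≠ ⊥ → 0 ≤ φ N ∧ (φ N = 0 ↔ tzero a b (d ↥N) = t₁) := by
    intro N hN
    have hv : d ↥N ≠ 0 := (dim_eq_zero_iff hzero N).not.mpr hN
    have hb := dprod_pos (hbpos t₁) hv
    have hf := continuous_muZ hbpos hCa hCb hv
    have hK := isCompact_range_muZ hbpos hCa hCb hconst hv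
    have ht : t₁ ≤ tzero a b (d ↥N) := tone_le_tzero hadd hN
    exact ⟨dprod_sub_smul_nonneg_of_le_tzero hb hf hK.bddBelow ht,
      dprod_sub_smul_eq_zero_iff hb hf hK.bddBelow hK.bddAbove ht⟩
  have hφ_nonneg : ∀ N, 0 ≤ φ N := by
    intro N
    rcases eq_or_ne N ⊥ with rfl | hN
    · simp only [φ, (dim_eq_zero_iff hzero ⊥).mpr rfl, dprod_zero_right, le_refl]
    · exact (hφ N hN).1
  have hZ : SupClosed {N | φ N = 0} := supClosed_setOf_eq_zero
    (fun p q => by simp only [φ, ← dprod_add_right, dim_sup_add_dim_inf hiso hadd]) hφ_nonneg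
  obtain ⟨y, hy⟩ := hM0
  have : Nontrivial M := nontrivial_of_ne y 0 hy
  obtain ⟨M', hM', hM't⟩ := exists_tzero_eq_tone (M := M) (a := a) (b := b) hadd
  have hM'Z : φ M' = 0 := (hφ M' hM').2.mpr hM't
  have hM₁Z : φ (sSup {N | φ N = 0}) = 0 :=
    CompleteLattice.WellFoundedGT.isSupClosedCompact _ inferInstance _ ⟨M', hM'Z⟩ hZ
  have hM₁ : sSup {N | φ N = 0} ≠ ⊥ := ne_bot_of_le_ne_bot hM' (le_sSup hM'Z)
  exact ⟨_, hM₁, (hφ _ hM₁).2.mp hM₁Z, fun N hN hNt => le_sSup ((hφ N hN).2.mpr hNt)⟩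

/-- For a green nonlinear stability function and a module `M`, among the
nonzero submodules `M' ⊆ M` with `t₀(M') = t₁(M)` there is a unique maximal one `M₁`,
and `M₁` contains every nonzero submodule `M' ⊆ M` with `t₀(M') = t₁(M)`. -/
theorem stmt13 (Λ : Type) [Ring Λ] {n : ℕ}
    (d : (N : Type) → [AddCommGroup N] → [Module Λ N] → Fin n → ℕ)
    (hiso : ∀ (N N' : Type) [AddCommGroup N] [Module Λ N] [AddCommGroup N'] [Module Λ N']
      [IsNoetherian Λ N] [IsArtinian Λ N], (N ≃ₗ[Λ] N') → d N = d N')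
    (hadd : ∀ (N : Type) [AddCommGroup N] [Module Λ N] [IsNoetherian Λ N] [IsArtinian Λ N]
      (A : Submodule Λ N), d ↥A + d (N ⧸ A) = d N)
    (hzero : ∀ (N : Type) [AddCommGroup N] [Module Λ N] [IsNoetherian Λ N] [IsArtinian Λ N],
      (d N = 0 ↔ ∀ y : N, y = 0))
    (a b : ℝ → Fin n → ℝ)
    (hbpos : ∀ t i, 0 < b t i)
    (hC1a : ∀ i, ContDiff ℝ 1 (fun t => a t i))
    (hC1b : ∀ i, ContDiff ℝ 1 (fun t => b t i))
    (hconst : ∃ T : ℝ, 0 < T ∧ (∀ t, T ≤ t → a t = a T ∧ b t = b T) ∧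
      (∀ t, t ≤ -T → a t = a (-T) ∧ b t = b (-T)))
    (hgreen : ZGreen d a b)
    (M : Type) [AddCommGroup M] [Module Λ M] [IsNoetherian Λ M] [IsArtinian Λ M]
    (hM0 : ∃ y : M, y ≠ 0) :
    ∃ M₁ : Submodule Λ M, M₁ ≠ ⊥ ∧ tzero a b (d ↥M₁) = tone d a b M ∧
      ∀ N : Submodule Λ M, N ≠ ⊥ → tzero a b (d ↥N) = tone d a b M → N ≤ M₁ :=
  stmt13_general Λ d hiso hadd hzero a b hbpos hC1a hC1b hconst M hM0
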